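/- Let C = (S, P, μ) be a Markov chain with finite state space S. For any integer α ≥ 0, any integer β ≥ 1, and any state s ∈ S, Σ_{h=0}^{4|S|−1} p_{βh+α}(s, C) ≤ 4 · |S|^{4|S|} · Σ_{h=0}^{|S|−1} p_{βh+α}(s, C). -/

import Mathlib

/-!
Writing `ν = p_α(·, C)` and `Q = P^β`, the sequence `p_{βh+α}(s, C)` is `p_h(s, C')` for the
chain `C' = (S, Q, ν)`, so it suffices to bound `p_m(s)` by `|S|^m · Σ_{k<|S|} p_k(s)`.
Each of the `|S|^m` walks of length `m` ending in `s` contains, while it has length `≥ |S|`,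
a cycle; cutting it out keeps both endpoints and, as transition probabilities are `≤ 1`, does
not decrease the weight. So every walk weighs at most some walk of length `k < |S|` ending
in `s`, which is one term of `p_k(s)`.
-/

open Finset

/-- `pReach μ P L s` is the probability `p_L(s, C)` of reaching `s` with exactly `L` steps in the
Markov chain `C = (S, P, μ)`: the sum over all `(s_0, …, s_{L-1}) ∈ S^L` of the probability of the
sequence `(s_0, …, s_{L-1}, s)`. -/
noncomputable def pReach {S : Type} [Fintype S] (μ : S → ℝ) (P : S → S → ℝ)
    (L : ℕ) (s : S) : ℝ :=
  ∑ T : Fin L → S,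
    (fun f : ℕ → S => μ (f 0) * ∏ h ∈ Finset.range L, P (f h) (f (h + 1)))
      (fun n => if h : n < L then T ⟨n, h⟩ else s)

open Matrix

variable {S : Type}

lemma dite_snoc_eq {L x : ℕ} (hx : x ≤ L) (T : Fin L → S) (t s : S) :
    (if h : x < L + 1 then (Fin.snoc T t : Fin (L + 1) → S) ⟨x, h⟩ else s) =
      if h : x < L then T ⟨x, h⟩ else t := by
  simp [Fin.snoc, Nat.lt_succ_of_le hx]

def walkWeight (P : S → S → ℝ) (f : ℕ → S) (m : ℕ) : ℝ :=
  ∏ x ∈ range m, P (f x) (f (x + 1))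

section Reach

variable [Fintype S] (μ : S → ℝ) (P : S → S → ℝ)

lemma pReach_zero (s : S) : pReach μ P 0 s = μ s := by
  simp [pReach]

lemma pReach_succ (L : ℕ) (s : S) :
    pReach μ P (L + 1) s = ∑ t, pReach μ P L t * P t s := by
  unfold pReach
  rw [← (Fin.snocEquiv fun _ ↦ S).sum_comp, Fintype.sum_prod_type]
  refine sum_congr rfl fun t _ ↦ ?_
  rw [sum_mul]
  refine sum_congr rfl fun T _ ↦ ?_
  simp only [Fin.snocEquiv_apply]
  rw [prod_range_succ, dite_snoc_eq (Nat.zero_le L), dite_snoc_eq le_rfl, dif_neg (lt_irrefl L),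
    dif_neg (lt_irrefl (L + 1)), mul_assoc]
  congr 2
  refine prod_congr rfl fun x hx ↦ ?_
  have hx : x < L := mem_range.mp hx
  rw [dite_snoc_eq hx.le, dite_snoc_eq hx]

lemma pReach_eq_vecMul [DecidableEq S] (L : ℕ) : pReach μ P L = μ ᵥ* of P ^ L := by
  induction L with
  | zero => ext s; simp [pReach_zero]
  | succ L ih =>
    ext s
    rw [pReach_succ, pow_succ, ← vecMul_vecMul, ← ih]
    simp [vecMul, dotProduct]

lemma pReach_mul_add [DecidableEq S] (α β h : ℕ) (s : S) :
    pReach μ P (β * h + α) s = pReach (pReach μ P α) (fun i j ↦ (of P ^ β) i j) h s := by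
  rw [pReach_eq_vecMul, pReach_eq_vecMul, pReach_eq_vecMul, vecMul_vecMul, add_comm, pow_add,
    pow_mul]
  rfl

lemma pReach_nonneg (hμ0 : ∀ s, 0 ≤ μ s) (hP0 : ∀ s s', 0 ≤ P s s') (L : ℕ) (s : S) :
    0 ≤ pReach μ P L s :=
  sum_nonneg fun _ _ ↦ mul_nonneg (hμ0 _) (prod_nonneg fun _ _ ↦ hP0 _ _)

end Reach

lemma exists_lt_le_card_map_eq [Fintype S] (f : ℕ → S) :
    ∃ i j, i < j ∧ j ≤ Fintype.card S ∧ f i = f j := by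
  obtain ⟨a, ha, b, hb, hab, hf⟩ := exists_ne_map_eq_of_card_lt_of_maps_to
    (s := range (Fintype.card S + 1)) (t := univ) (f := f) (by simp) fun _ _ ↦ mem_univ _
  rw [mem_range, Nat.lt_succ_iff] at ha hb
  rcases hab.lt_or_gt with h | h
  exacts [⟨a, b, h, hb, hf⟩, ⟨b, a, h, ha, hf.symm⟩]

section Walk

variable (P : S → S → ℝ) (hP0 : ∀ s s', 0 ≤ P s s') (hP1 : ∀ s s', P s s' ≤ 1)
include hP0 hP1

lemma exists_walkWeight_le_of_map_eq (f : ℕ → S) {i d : ℕ} (hf : f i = f (i + d)) (r : ℕ) :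
    ∃ g : ℕ → S, g 0 = f 0 ∧ g (i + r) = f (i + d + r) ∧
      walkWeight P f (i + d + r) ≤ walkWeight P g (i + r) := by
  set g : ℕ → S := fun x ↦ if x ≤ i then f x else f (x + d)
  have hg_tail : ∀ x, g (i + x) = f (i + d + x) := by
    rintro (_ | x)
    · simpa [g] using hf
    · simp only [g, if_neg (by omega : ¬i + (x + 1) ≤ i)]
      congr 1
      omega
  refine ⟨g, by simp [g], hg_tail r, ?_⟩
  have hhead : walkWeight P g i = walkWeight P f i :=
    prod_congr rfl fun x hx ↦ by
      have hx : x < i := mem_range.mp hx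
      simp only [g, if_pos hx.le, if_pos (Nat.succ_le_of_lt hx)]
  have htail : ∏ x ∈ range r, P (g (i + x)) (g (i + x + 1)) =
      ∏ x ∈ range r, P (f (i + d + x)) (f (i + d + x + 1)) :=
    prod_congr rfl fun x _ ↦ by rw [add_assoc i x 1, hg_tail, hg_tail]; rfl
  have hcycle : ∏ x ∈ range d, P (f (i + x)) (f (i + x + 1)) ≤ 1 :=
    prod_le_one (fun _ _ ↦ hP0 _ _) fun _ _ ↦ hP1 _ _
  unfold walkWeight at hhead ⊢
  rw [prod_range_add, prod_range_add, prod_range_add, hhead, htail]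
  calc _ ≤ (∏ x ∈ range i, P (f x) (f (x + 1))) * 1 *
        ∏ x ∈ range r, P (f (i + d + x)) (f (i + d + x + 1)) := by
        gcongr <;> exact prod_nonneg fun _ _ ↦ hP0 _ _
    _ = _ := by rw [mul_one]

lemma exists_walkWeight_le_of_lt_card [Fintype S] (m : ℕ) (f : ℕ → S) :
    ∃ g : ℕ → S, ∃ k < Fintype.card S, g 0 = f 0 ∧ g k = f m ∧
      walkWeight P f m ≤ walkWeight P g k := by
  induction m using Nat.strong_induction_on generalizing f with
  | _ m ih =>
  by_cases hm : m < Fintype.card S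
  · exact ⟨f, m, hm, rfl, rfl, le_rfl⟩
  obtain ⟨i, j, hij, hj, hf⟩ := exists_lt_le_card_map_eq f
  obtain ⟨d, rfl⟩ := Nat.exists_eq_add_of_le hij.le
  obtain ⟨r, rfl⟩ : ∃ r, m = i + d + r := ⟨m - (i + d), by omega⟩
  obtain ⟨g, hg0, hgr, hfg⟩ := exists_walkWeight_le_of_map_eq P hP0 hP1 f hf r
  obtain ⟨g', k, hk, hg'0, hg'k, hgg'⟩ := ih (i + r) (by omega) g
  exact ⟨g', k, hk, hg'0.trans hg0, hg'k.trans hgr, hfg.trans hgg'⟩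

end Walk

section Bound

variable [Fintype S] (μ : S → ℝ) (P : S → S → ℝ) (hμ0 : ∀ s, 0 ≤ μ s)
  (hP0 : ∀ s s', 0 ≤ P s s')
include hμ0 hP0

lemma mul_walkWeight_le_pReach {k : ℕ} {s : S} (f : ℕ → S) (hf : f k = s) :
    μ (f 0) * walkWeight P f k ≤ pReach μ P k s := by
  have hagree : ∀ x ≤ k, (if h : x < k then f x else s) = f x := by
    intro x hx
    split_ifs with h
    · rfl
    · rw [← hf, show x = k by omega]
  unfold pReach
  refine (le_of_eq ?_).trans <|
    single_le_sum (fun T _ ↦ ?_) (mem_univ fun i : Fin k ↦ f i)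
  · dsimp only
    rw [hagree 0 k.zero_le]
    exact congrArg _ <| prod_congr rfl fun x hx ↦ by
      have hx : x < k := mem_range.mp hx
      rw [hagree x hx.le, hagree (x + 1) hx]
  · exact mul_nonneg (hμ0 _) (prod_nonneg fun _ _ ↦ hP0 _ _)

lemma pReach_le_card_pow_mul_sum (hP1 : ∀ s s', P s s' ≤ 1) (m : ℕ) (s : S) :
    pReach μ P m s ≤
      (Fintype.card S : ℝ) ^ m * ∑ k ∈ range (Fintype.card S), pReach μ P k s := by
  have hwalk (f : ℕ → S) (hf : f m = s) :
      μ (f 0) * walkWeight P f m ≤ ∑ k ∈ range (Fintype.card S), pReach μ P k s := by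
    obtain ⟨g, k, hk, hg0, hgk, hfg⟩ := exists_walkWeight_le_of_lt_card P hP0 hP1 m f
    calc μ (f 0) * walkWeight P f m ≤ μ (g 0) * walkWeight P g k := by
          rw [hg0]; exact mul_le_mul_of_nonneg_left hfg (hμ0 _)
      _ ≤ pReach μ P k s := mul_walkWeight_le_pReach μ P hμ0 hP0 g (hgk.trans hf)
      _ ≤ _ := single_le_sum (fun k _ ↦ pReach_nonneg μ P hμ0 hP0 k s) (mem_range.mpr hk)
  calc pReach μ P m s
      ≤ ∑ _T : Fin m → S, ∑ k ∈ range (Fintype.card S), pReach μ P k s :=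
        sum_le_sum fun T _ ↦
          hwalk (fun n ↦ if h : n < m then T ⟨n, h⟩ else s) (dif_neg (lt_irrefl m))
    _ = _ := by simp

end Bound

theorem stmt2_general {S : Type} [Fintype S]
    (μ : S → ℝ) (P : S → S → ℝ)
    (hμ0 : ∀ s, 0 ≤ μ s)
    (hP0 : ∀ s s', 0 ≤ P s s') (hP1 : ∀ s, ∑ s', P s s' = 1)
    (α β : ℕ) (s : S) :
    ∑ h ∈ Finset.range (4 * Fintype.card S), pReach μ P (β * h + α) s ≤
      4 * (Fintype.card S : ℝ) ^ (4 * Fintype.card S) *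
        ∑ h ∈ Finset.range (Fintype.card S), pReach μ P (β * h + α) s := by
  classical
  set n := Fintype.card S
  have hn : 1 ≤ n := Fintype.card_pos_iff.mpr ⟨s⟩
  have hQ : of P ^ β ∈ rowStochastic ℝ S :=
    pow_mem (mem_rowStochastic_iff_sum.mpr ⟨hP0, hP1⟩) β
  simp only [pReach_mul_add]
  set ν := pReach μ P α
  set Q : S → S → ℝ := fun i j ↦ (of P ^ β) i j
  have hν0 : ∀ t, 0 ≤ ν t := pReach_nonneg μ P hμ0 hP0 α
  have hQ0 : ∀ i j, 0 ≤ Q i j := fun _ _ ↦ nonneg_of_mem_rowStochastic hQ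
  have hQ1 : ∀ i j, Q i j ≤ 1 := fun _ _ ↦ le_one_of_mem_rowStochastic hQ
  set F := ∑ k ∈ range n, pReach ν Q k s
  have hF : 0 ≤ F := sum_nonneg fun k _ ↦ pReach_nonneg ν Q hν0 hQ0 k s
  calc ∑ h ∈ range (4 * n), pReach ν Q h s
      ≤ ∑ h ∈ range (4 * n), (n : ℝ) ^ (4 * n - 1) * F := by
        refine sum_le_sum fun h hh ↦ (pReach_le_card_pow_mul_sum ν Q hν0 hQ0 hQ1 h s).trans ?_
        have : h ≤ 4 * n - 1 := by have := mem_range.mp hh; omega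
        gcongr
        exact_mod_cast hn
    _ = 4 * (n : ℝ) ^ (4 * n) * F := by
        have hpow : (n : ℝ) ^ (4 * n) = n ^ (4 * n - 1) * n := by
          rw [← pow_succ, Nat.sub_add_cancel (by omega)]
        rw [sum_const, card_range, nsmul_eq_mul, hpow]
        push_cast
        ring

theorem stmt2 {S : Type} [Fintype S]
    (μ : S → ℝ) (P : S → S → ℝ)
    (hμ0 : ∀ s, 0 ≤ μ s) (hμ1 : ∑ s, μ s = 1)
    (hP0 : ∀ s s', 0 ≤ P s s') (hP1 : ∀ s, ∑ s', P s s' = 1)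
    (α β : ℕ) (hβ : 1 ≤ β) (s : S) :
    ∑ h ∈ Finset.range (4 * Fintype.card S), pReach μ P (β * h + α) s ≤
      4 * (Fintype.card S : ℝ) ^ (4 * Fintype.card S) *
        ∑ h ∈ Finset.range (Fintype.card S), pReach μ P (β * h + α) s :=
  stmt2_general μ P hμ0 hP0 hP1 α β s
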